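/- arXiv:2102.00732 — 5 statements merged into one kernel-verified Lean document; each statement's English description precedes it below -/
import Mathlib

section
/- Let q1, q2 > 0, Q = 1/q1 + 1/q2, and δ, ν > 0. Then the integral over ℝ² of ρ(t)^{-ν}·1{ρ(t) < δ} dt is finite if and only if Q > ν, where ρ(t) = |t1|^{q1} + |t2|^{q2}. -/
/-!
The gauge `ρ(t) = |t₁|^q₁ + |t₂|^q₂` is homogeneous of degree one under the anisotropic dilations
`(t₁, t₂) ↦ (r^{1/q₁} t₁, r^{1/q₂} t₂)`, whose Jacobian is `r^Q`; hence `|{ρ < r}| = C r^Q` with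
`0 < C < ∞`. By the layer-cake formula, `∫_{ρ < δ} ρ^{-ν} = C ∫_0^∞ min(δ, s^{-1/ν})^Q ds`, and the
integrand behaves like `s^{-Q/ν}` at infinity, which is integrable exactly when `ν < Q`.
-/

open MeasureTheory Set
open scoped ENNReal

lemma lintegral_ofReal_min_rpow_ne_top_iff {Q δ ν : ℝ} (hδ : 0 < δ) (hν : 0 < ν) :
    ∫⁻ s in Ioi 0, ENNReal.ofReal (min δ (s ^ (-ν⁻¹)) ^ Q) ≠ ⊤ ↔ ν < Q := by
  set s₀ := δ ^ (-ν)
  have hs₀ : 0 < s₀ := Real.rpow_pos_of_pos hδ _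
  have hexp : -ν⁻¹ ≤ 0 := by simp [hν.le]
  have hs₀δ : s₀ ^ (-ν⁻¹) = δ := by
    rw [← Real.rpow_mul hδ.le, neg_mul_neg, mul_inv_cancel₀ hν.ne', Real.rpow_one]
  have hnear : ∀ s ∈ Ioc 0 s₀, ENNReal.ofReal (min δ (s ^ (-ν⁻¹)) ^ Q) = ENNReal.ofReal (δ ^ Q) :=
    fun s hs => by
      rw [min_eq_left (hs₀δ ▸ Real.rpow_le_rpow_of_nonpos hs.1 hs.2 hexp)]
  have hfar : ∀ s ∈ Ioi s₀, ENNReal.ofReal (min δ (s ^ (-ν⁻¹)) ^ Q)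
      = ENNReal.ofReal (s ^ (-ν⁻¹ * Q)) := fun s hs => by
    rw [min_eq_right (hs₀δ ▸ Real.rpow_le_rpow_of_nonpos hs₀ hs.le hexp),
      ← Real.rpow_mul (hs₀.trans hs).le]
  have hnear_fin : ∫⁻ s in Ioc 0 s₀, ENNReal.ofReal (δ ^ Q) ≠ ⊤ := by
    simp [Real.volume_Ioc, ENNReal.mul_eq_top]
  rw [← Ioc_union_Ioi_eq_Ioi hs₀.le, lintegral_union measurableSet_Ioi (Ioc_disjoint_Ioi le_rfl),
    setLIntegral_congr_fun measurableSet_Ioc hnear, setLIntegral_congr_fun measurableSet_Ioi hfar,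
    Ne, ENNReal.add_eq_top, not_or, and_iff_right hnear_fin, ← Ne,
    lintegral_ofReal_ne_top_iff_integrable (by fun_prop)
      ((ae_restrict_iff' measurableSet_Ioi).mpr
        (ae_of_all _ fun s hs => Real.rpow_nonneg (hs₀.trans hs).le _)),
    ← IntegrableOn, integrableOn_Ioi_rpow_iff hs₀, neg_mul, neg_lt_neg_iff, inv_mul_eq_div,
    one_lt_div hν]

lemma rpow_neg_superlevel_inter_sublevel {α : Type*} {ρ : α → ℝ} {δ ν s : ℝ}
    (hρ0 : ∀ t, 0 ≤ ρ t) (hν : 0 < ν) (hs : 0 < s) :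
    {t | s < ρ t ^ (-ν)} ∩ {t | ρ t < δ} = {t | ρ t < min δ (s ^ (-ν⁻¹))} \ {t | ρ t = 0} := by
  ext t
  simp only [mem_inter_iff, mem_sdiff, mem_ofPred_eq, lt_min_iff]
  rcases (hρ0 t).eq_or_lt with h0 | hpos
  -- `0 ^ (-ν) = 0` in Lean, so the zero set of `ρ` lies in no superlevel set
  · simp [← h0, Real.zero_rpow (neg_ne_zero.mpr hν.ne'), hs.le]
  · rw [← inv_neg, Real.lt_rpow_inv_iff_of_neg hpos hs (neg_lt_zero.mpr hν)]
    simp [hpos.ne', and_comm]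

section LayerCake

variable {α : Type*} [MeasurableSpace α] {μ : Measure α} {ρ : α → ℝ} {Q δ ν : ℝ} {C : ℝ≥0∞}

lemma measure_restrict_rpow_neg_superlevel (hρm : Measurable ρ) (hρ0 : ∀ t, 0 ≤ ρ t)
    (hnull : μ {t | ρ t = 0} = 0)
    (hvol : ∀ r, 0 < r → μ {t | ρ t < r} = ENNReal.ofReal (r ^ Q) * C)
    (hδ : 0 < δ) (hν : 0 < ν) {s : ℝ} (hs : 0 < s) :
    μ.restrict {t | ρ t < δ} {t | s < ρ t ^ (-ν)}
      = ENNReal.ofReal (min δ (s ^ (-ν⁻¹)) ^ Q) * C := by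
  rw [Measure.restrict_apply (measurableSet_lt measurable_const (hρm.pow_const _)),
    rpow_neg_superlevel_inter_sublevel hρ0 hν hs, measure_sdiff_null hnull,
    hvol _ (lt_min hδ (Real.rpow_pos_of_pos hs _))]

theorem integrableOn_rpow_neg_sublevel_iff (hρm : Measurable ρ) (hρ0 : ∀ t, 0 ≤ ρ t)
    (hnull : μ {t | ρ t = 0} = 0)
    (hvol : ∀ r, 0 < r → μ {t | ρ t < r} = ENNReal.ofReal (r ^ Q) * C)
    (hC0 : C ≠ 0) (hCtop : C ≠ ⊤) (hδ : 0 < δ) (hν : 0 < ν) :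
    IntegrableOn (fun t => ρ t ^ (-ν)) {t | ρ t < δ} μ ↔ ν < Q := by
  have hf_nn : ∀ t, 0 ≤ ρ t ^ (-ν) := fun t => Real.rpow_nonneg (hρ0 t) _
  rw [IntegrableOn, ← lintegral_ofReal_ne_top_iff_integrable
      (hρm.pow_const _).aestronglyMeasurable (ae_of_all _ hf_nn),
    lintegral_eq_lintegral_meas_lt _ (ae_of_all _ hf_nn) (hρm.pow_const _).aemeasurable,
    setLIntegral_congr_fun measurableSet_Ioi
      fun s hs => measure_restrict_rpow_neg_superlevel hρm hρ0 hnull hvol hδ hν hs,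
    lintegral_mul_const' _ _ hCtop, ← lintegral_ofReal_min_rpow_ne_top_iff hδ hν]
  simp [ENNReal.mul_eq_top, hC0, hCtop]

end LayerCake

lemma volume_preimage_prodMap_mul {a b : ℝ} (ha : a ≠ 0) (hb : b ≠ 0) (A : Set (ℝ × ℝ)) :
    volume (Prod.map (a * ·) (b * ·) ⁻¹' A) = ENNReal.ofReal |(a * b)⁻¹| * volume A := by
  have hdet : LinearMap.det ((a • LinearMap.id).prodMap (b • LinearMap.id) :
      Module.End ℝ (ℝ × ℝ)) = a * b := by
    simp [LinearMap.det_prodMap]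
  rw [← hdet]
  exact Measure.addHaar_preimage_linearMap volume (hdet ▸ mul_ne_zero ha hb) A

noncomputable def anisotropicGauge (q₁ q₂ : ℝ) (t : ℝ × ℝ) : ℝ := |t.1| ^ q₁ + |t.2| ^ q₂

namespace anisotropicGauge

variable {q₁ q₂ : ℝ}

lemma nonneg (q₁ q₂ : ℝ) (t : ℝ × ℝ) : 0 ≤ anisotropicGauge q₁ q₂ t := by
  unfold anisotropicGauge; positivity

lemma continuous (hq₁ : 0 ≤ q₁) (hq₂ : 0 ≤ q₂) : Continuous (anisotropicGauge q₁ q₂) :=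
  ((continuous_abs.comp continuous_fst).rpow_const fun _ => Or.inr hq₁).add
    ((continuous_abs.comp continuous_snd).rpow_const fun _ => Or.inr hq₂)

lemma eq_zero_iff (hq₁ : 0 < q₁) (hq₂ : 0 < q₂) {t : ℝ × ℝ} :
    anisotropicGauge q₁ q₂ t = 0 ↔ t = 0 := by
  have h₁ := Real.rpow_nonneg (abs_nonneg t.1) q₁
  have h₂ := Real.rpow_nonneg (abs_nonneg t.2) q₂
  rw [anisotropicGauge, add_eq_zero_iff_of_nonneg h₁ h₂, Real.rpow_eq_zero (abs_nonneg _) hq₁.ne',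
    Real.rpow_eq_zero (abs_nonneg _) hq₂.ne', abs_eq_zero, abs_eq_zero, Prod.ext_iff]
  rfl

lemma dilate (hq₁ : 0 < q₁) (hq₂ : 0 < q₂) {r : ℝ} (hr : 0 < r) (t : ℝ × ℝ) :
    anisotropicGauge q₁ q₂ (r ^ q₁⁻¹ * t.1, r ^ q₂⁻¹ * t.2) = r * anisotropicGauge q₁ q₂ t := by
  simp only [anisotropicGauge, abs_mul, abs_of_pos (Real.rpow_pos_of_pos hr _)]
  rw [Real.mul_rpow (Real.rpow_nonneg hr.le _) (abs_nonneg _),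
    Real.mul_rpow (Real.rpow_nonneg hr.le _) (abs_nonneg _), Real.rpow_inv_rpow hr.le hq₁.ne',
    Real.rpow_inv_rpow hr.le hq₂.ne', mul_add]

lemma volume_sublevel (hq₁ : 0 < q₁) (hq₂ : 0 < q₂) {r : ℝ} (hr : 0 < r) :
    volume {t | anisotropicGauge q₁ q₂ t < r}
      = ENNReal.ofReal (r ^ (q₁⁻¹ + q₂⁻¹)) * volume {t | anisotropicGauge q₁ q₂ t < 1} := by
  have hpre : {t | anisotropicGauge q₁ q₂ t < r} = Prod.map (r⁻¹ ^ q₁⁻¹ * ·) (r⁻¹ ^ q₂⁻¹ * ·) ⁻¹'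
      {t | anisotropicGauge q₁ q₂ t < 1} := by
    ext t
    simp only [mem_preimage, mem_ofPred_eq, Prod.map, dilate hq₁ hq₂ (inv_pos.mpr hr)]
    rw [inv_mul_lt_iff₀ hr, mul_one]
  rw [hpre, volume_preimage_prodMap_mul (Real.rpow_pos_of_pos (inv_pos.mpr hr) _).ne'
    (Real.rpow_pos_of_pos (inv_pos.mpr hr) _).ne', Real.inv_rpow hr.le, Real.inv_rpow hr.le,
    ← mul_inv, inv_inv, ← Real.rpow_add hr, abs_of_pos (Real.rpow_pos_of_pos hr _)]

lemma volume_sublevel_one_pos (hq₁ : 0 < q₁) (hq₂ : 0 < q₂) :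
    0 < volume {t | anisotropicGauge q₁ q₂ t < 1} :=
  (isOpen_lt (continuous hq₁.le hq₂.le) continuous_const).measure_pos volume
    ⟨0, by simp [(eq_zero_iff hq₁ hq₂).mpr rfl]⟩

lemma sublevel_one_subset (hq₁ : 0 < q₁) (hq₂ : 0 < q₂) :
    {t | anisotropicGauge q₁ q₂ t < 1} ⊆ Ioo (-1) 1 ×ˢ Ioo (-1) 1 := by
  intro t ht
  have h₁ := Real.rpow_nonneg (abs_nonneg t.1) q₁
  have h₂ := Real.rpow_nonneg (abs_nonneg t.2) q₂
  simp only [mem_ofPred_eq, anisotropicGauge] at ht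
  exact ⟨abs_lt.mp ((Real.rpow_lt_one_iff' (abs_nonneg _) hq₁).mp (by linarith)),
    abs_lt.mp ((Real.rpow_lt_one_iff' (abs_nonneg _) hq₂).mp (by linarith))⟩

lemma volume_sublevel_one_lt_top (hq₁ : 0 < q₁) (hq₂ : 0 < q₂) :
    volume {t | anisotropicGauge q₁ q₂ t < 1} < ⊤ :=
  (measure_mono (sublevel_one_subset hq₁ hq₂)).trans_lt <| by
    simp [Measure.volume_eq_prod, Measure.prod_prod, Real.volume_Ioo, ENNReal.mul_lt_top]

end anisotropicGauge

theorem stmt_1 (q1 q2 δ ν : ℝ) (hq1 : 0 < q1) (hq2 : 0 < q2) (hδ : 0 < δ) (hν : 0 < ν) :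
    IntegrableOn (fun t : ℝ × ℝ => (|t.1| ^ q1 + |t.2| ^ q2) ^ (-ν))
      {t : ℝ × ℝ | |t.1| ^ q1 + |t.2| ^ q2 < δ} volume
    ↔ 1 / q1 + 1 / q2 > ν := by
  have hnull : volume {t | anisotropicGauge q1 q2 t = 0} = 0 :=
    measure_mono_null (fun _ ht => (anisotropicGauge.eq_zero_iff hq1 hq2).mp ht)
      (measure_singleton 0)
  rw [gt_iff_lt, one_div, one_div]
  exact integrableOn_rpow_neg_sublevel_iff
    (anisotropicGauge.continuous hq1.le hq2.le).measurable (anisotropicGauge.nonneg q1 q2) hnull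
    (fun _ hr => anisotropicGauge.volume_sublevel hq1 hq2 hr)
    (anisotropicGauge.volume_sublevel_one_pos hq1 hq2).ne'
    (anisotropicGauge.volume_sublevel_one_lt_top hq1 hq2).ne hδ hν
end

section
/- Let q1, q2 > 0 and q = max{q1, q2, 1}. Then for all t, s ∈ ℝ², ρ(t+s)^{1/q} ≤ ρ(t)^{1/q} + ρ(s)^{1/q}, where ρ(t) = |t1|^{q1} + |t2|^{q2}. -/
/-!
Write `|x|^{qᵢ} = (|x|^{qᵢ/q})^q`. Since `qᵢ/q ≤ 1`, the map `x ↦ |x|^{qᵢ/q}` is subadditive,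
so `ρ(t+s) ≤ ∑ᵢ (uᵢ + vᵢ)^q` with `uᵢ = |tᵢ|^{qᵢ/q}`, `vᵢ = |sᵢ|^{qᵢ/q}`. Minkowski's inequality
for the `ℓ^q` norm on `ℝ²` (`q ≥ 1`) then bounds the `1/q`-th power of the right-hand side by
`ρ(t)^{1/q} + ρ(s)^{1/q}`.
-/

open Real

lemma abs_add_rpow_le_abs_rpow_add_abs_rpow {r : ℝ} (hr₀ : 0 ≤ r) (hr₁ : r ≤ 1) (x y : ℝ) :
    |x + y| ^ r ≤ |x| ^ r + |y| ^ r :=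
  (rpow_le_rpow (abs_nonneg _) (abs_add_le x y) hr₀).trans
    (rpow_add_le_add_rpow (abs_nonneg x) (abs_nonneg y) hr₀ hr₁)

lemma abs_rpow_div_rpow {p q : ℝ} (hq : q ≠ 0) (x : ℝ) : (|x| ^ (p / q)) ^ q = |x| ^ p := by
  rw [← rpow_mul (abs_nonneg x), div_mul_cancel₀ p hq]

lemma abs_add_rpow_le_rpow_add_rpow_div {p q : ℝ} (hp : 0 ≤ p) (hpq : p ≤ q) (hq : 0 < q)
    (x y : ℝ) : |x + y| ^ p ≤ (|x| ^ (p / q) + |y| ^ (p / q)) ^ q := by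
  rw [← abs_rpow_div_rpow hq.ne' (x + y)]
  exact rpow_le_rpow (by positivity)
    (abs_add_rpow_le_abs_rpow_add_abs_rpow (by positivity) ((div_le_one hq).2 hpq) x y) hq.le

lemma Lp_add_le_of_nonneg_fin_two {p a₁ a₂ b₁ b₂ : ℝ} (hp : 1 ≤ p) (ha₁ : 0 ≤ a₁) (ha₂ : 0 ≤ a₂)
    (hb₁ : 0 ≤ b₁) (hb₂ : 0 ≤ b₂) :
    ((a₁ + b₁) ^ p + (a₂ + b₂) ^ p) ^ (1 / p) ≤
      (a₁ ^ p + a₂ ^ p) ^ (1 / p) + (b₁ ^ p + b₂ ^ p) ^ (1 / p) := by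
  simpa [Fin.sum_univ_two] using Real.Lp_add_le_of_nonneg (s := Finset.univ) (f := ![a₁, a₂])
    (g := ![b₁, b₂]) hp (by simp [Fin.forall_fin_two, ha₁, ha₂])
    (by simp [Fin.forall_fin_two, hb₁, hb₂])

theorem rpow_abs_rpow_add_abs_rpow_subadditive {q₁ q₂ q : ℝ} (hq₁ : 0 ≤ q₁) (hq₂ : 0 ≤ q₂)
    (hq₁q : q₁ ≤ q) (hq₂q : q₂ ≤ q) (hq : 1 ≤ q) (t s : ℝ × ℝ) :
    (|t.1 + s.1| ^ q₁ + |t.2 + s.2| ^ q₂) ^ (1 / q) ≤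
      (|t.1| ^ q₁ + |t.2| ^ q₂) ^ (1 / q) + (|s.1| ^ q₁ + |s.2| ^ q₂) ^ (1 / q) := by
  have hq₀ : 0 < q := one_pos.trans_le hq
  calc (|t.1 + s.1| ^ q₁ + |t.2 + s.2| ^ q₂) ^ (1 / q)
      ≤ ((|t.1| ^ (q₁ / q) + |s.1| ^ (q₁ / q)) ^ q
          + (|t.2| ^ (q₂ / q) + |s.2| ^ (q₂ / q)) ^ q) ^ (1 / q) := by
        gcongr
        · exact abs_add_rpow_le_rpow_add_rpow_div hq₁ hq₁q hq₀ _ _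
        · exact abs_add_rpow_le_rpow_add_rpow_div hq₂ hq₂q hq₀ _ _
    _ ≤ _ := by
        refine (Lp_add_le_of_nonneg_fin_two hq (by positivity) (by positivity) (by positivity)
          (by positivity)).trans_eq ?_
        simp only [abs_rpow_div_rpow hq₀.ne']

theorem stmt_3 (q1 q2 : ℝ) (hq1 : 0 < q1) (hq2 : 0 < q2) :
    ∀ t s : ℝ × ℝ,
      (|t.1 + s.1| ^ q1 + |t.2 + s.2| ^ q2) ^ (1 / max (max q1 q2) 1) ≤
        (|t.1| ^ q1 + |t.2| ^ q2) ^ (1 / max (max q1 q2) 1) +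
          (|s.1| ^ q1 + |s.2| ^ q2) ^ (1 / max (max q1 q2) 1) :=
  rpow_abs_rpow_add_abs_rpow_subadditive hq1.le hq2.le
    ((le_max_left _ _).trans (le_max_left _ _)) ((le_max_right _ _).trans (le_max_left _ _))
    (le_max_right _ _)
end

section
/- Let q1 = 1, q2 = 2, ρ(t) = |t1| + |t2|², Q = 3/2, and for χ ∈ ℝ define g̃0(t) = t1^χ exp(−t2²/t1)·1{t1 > 0}. Then there is a constant C > 0 such that for all t with t1 > 0: |g̃0(t)| ≤ C ρ(t)^χ, |∂_1 g̃0(t)| ≤ C ρ(t)^{χ−1}, |∂_2 g̃0(t)| ≤ C ρ(t)^{χ−1/2}, and |∂_{12} g̃0(t)| ≤ C ρ(t)^{χ−3/2}. -/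
/-- `g̃₀(t) = t₁^χ e^{-t₂²/t₁}` for `t₁ > 0`, zero otherwise. -/
noncomputable def gTilde0 (χ : ℝ) (t : ℝ × ℝ) : ℝ :=
  if 0 < t.1 then t.1 ^ χ * Real.exp (-(t.2 ^ 2) / t.1) else 0

/-- `ρ(t) = |t₁| + |t₂|²`. -/
noncomputable def rhoHeat (t : ℝ × ℝ) : ℝ := |t.1| + |t.2| ^ 2

/-!
Put `z = t₂²/t₁`, so that `ρ(t) = t₁ (1 + z)`. For `t₁ > 0` the function and the three derivatives
are `t₁^{χ-k} |t₂|^j e^{-z}` times an affine function of `z`, with `k - j/2` the loss of homogeneity.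
Since `e^{-z} ≤ C (1 + z)^α` for every real `α`, the affine factor and `e^{-z}` together are at most
`C (1 + z)^{χ-k}`, which turns `t₁^{χ-k}` into `ρ^{χ-k}`; the remaining `|t₂|` is at most `ρ^{1/2}`.
-/

open Real

theorem exp_neg_le_mul_one_add_rpow (α : ℝ) :
    ∃ C, 0 < C ∧ ∀ z, 0 ≤ z → exp (-z) ≤ C * (1 + z) ^ α := by
  set p := max 1 (-α)
  have hp : 1 ≤ p := le_max_left _ _
  have hp0 : 0 < p := by linarith
  refine ⟨p ^ p, by positivity, fun z hz => ?_⟩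
  have h1z : 1 ≤ 1 + z := by linarith
  -- `e^z = (e^{z/p})^p ≥ (1 + z/p)^p ≥ ((1 + z)/p)^p`
  have hpow : (1 + z) ^ p ≤ p ^ p * exp z :=
    calc (1 + z) ^ p = p ^ p * ((1 + z) / p) ^ p := by
          rw [div_rpow (by linarith) hp0.le]; field_simp
      _ ≤ p ^ p * exp (z / p) ^ p := by
          gcongr
          rw [div_le_iff₀ hp0]
          nlinarith [add_one_le_exp (z / p), div_mul_cancel₀ z hp0.ne']
      _ = p ^ p * exp z := by rw [← exp_mul, div_mul_cancel₀ z hp0.ne']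
  calc exp (-z) ≤ p ^ p * (1 + z) ^ (-p) := by
        rw [exp_neg, rpow_neg (by linarith), ← div_eq_mul_inv,
          inv_le_comm₀ (exp_pos z) (by positivity), inv_div, div_le_iff₀' (by positivity)]
        exact hpow
    _ ≤ p ^ p * (1 + z) ^ α := by
        gcongr
        exact neg_le.mp (le_max_right _ _)

section Derivatives

variable (χ : ℝ) {x : ℝ} (y : ℝ)

theorem hasDerivAt_gTilde0_fst (hx : 0 < x) :
    HasDerivAt (fun x => gTilde0 χ (x, y))
      (x ^ (χ - 1) * exp (-(y ^ 2) / x) * (χ + y ^ 2 / x)) x := by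
  have hquot : HasDerivAt (fun x : ℝ => -(y ^ 2) / x) (y ^ 2 / x ^ 2) x := by
    simpa [div_eq_mul_inv] using (hasDerivAt_inv hx.ne').const_mul (-(y ^ 2))
  have hprod := (hasDerivAt_rpow_const (p := χ) (Or.inl hx.ne')).mul hquot.exp
  have hxχ : x ^ χ = x ^ (χ - 1) * x := by rw [← rpow_add_one hx.ne']; ring_nf
  refine (hprod.congr_deriv ?_).congr_of_eventuallyEq ?_
  · rw [hxχ]; field_simp
  · filter_upwards [Ioi_mem_nhds hx] with a ha
    simp [gTilde0, show (0 : ℝ) < a from ha]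

theorem hasDerivAt_gTilde0_snd (hx : 0 < x) :
    HasDerivAt (fun y => gTilde0 χ (x, y)) (-(2 * y) * x ^ (χ - 1) * exp (-(y ^ 2) / x)) y := by
  have hquot : HasDerivAt (fun y : ℝ => -(y ^ 2) / x) (-(2 * y) / x) y := by
    simpa using ((hasDerivAt_pow 2 y).neg).div_const x
  have hxχ : x ^ χ = x ^ (χ - 1) * x := by rw [← rpow_add_one hx.ne']; ring_nf
  simp only [gTilde0, hx, if_true]
  refine (hquot.exp.const_mul (x ^ χ)).congr_deriv ?_
  rw [hxχ]; field_simp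

theorem hasDerivAt_deriv_gTilde0_fst_snd (hx : 0 < x) :
    HasDerivAt (fun y => deriv (fun x => gTilde0 χ (x, y)) x)
      (2 * y * x ^ (χ - 2) * exp (-(y ^ 2) / x) * (1 - χ - y ^ 2 / x)) y := by
  have hquot : HasDerivAt (fun y : ℝ => -(y ^ 2) / x) (-(2 * y) / x) y := by
    simpa using ((hasDerivAt_pow 2 y).neg).div_const x
  have hpoly : HasDerivAt (fun y : ℝ => χ + y ^ 2 / x) (2 * y / x) y := by
    simpa using ((hasDerivAt_pow 2 y).div_const x).const_add χ
  have hxχ : x ^ (χ - 1) = x ^ (χ - 2) * x := by rw [← rpow_add_one hx.ne']; ring_nf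
  simp only [fun y => (hasDerivAt_gTilde0_fst χ y hx).deriv, mul_assoc]
  refine ((hquot.exp.mul hpoly).const_mul (x ^ (χ - 1))).congr_deriv ?_
  rw [hxχ]; field_simp; ring

end Derivatives

section Bounds

variable {χ C α : ℝ} {t : ℝ × ℝ}

theorem rhoHeat_eq_mul (ht : 0 < t.1) : rhoHeat t = t.1 * (1 + t.2 ^ 2 / t.1) := by
  rw [rhoHeat, abs_of_pos ht, sq_abs]; field_simp

theorem abs_snd_le_rhoHeat_rpow_half (t : ℝ × ℝ) : |t.2| ≤ rhoHeat t ^ (1 / 2 : ℝ) := by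
  rw [← sqrt_eq_rpow, ← sqrt_sq_eq_abs, ← sq_abs]
  exact sqrt_le_sqrt (le_add_of_nonneg_left (abs_nonneg _))

theorem abs_add_le_mul_one_add (c : ℝ) {z : ℝ} (hz : 0 ≤ z) : |c + z| ≤ (|c| + 1) * (1 + z) := by
  have := abs_add_le c z
  rw [abs_of_nonneg hz] at this
  nlinarith [abs_nonneg c]

theorem rpow_mul_exp_neg_mul_le_mul_rhoHeat_rpow {β : ℝ}
    (hC : ∀ z, 0 ≤ z → exp (-z) ≤ C * (1 + z) ^ α) (hαβ : α + 1 ≤ β) (ht : 0 < t.1) :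
    t.1 ^ β * exp (-(t.2 ^ 2) / t.1) * (1 + t.2 ^ 2 / t.1) ≤ C * rhoHeat t ^ β := by
  set z := t.2 ^ 2 / t.1
  have hz : 0 ≤ z := by positivity
  have h1z : 1 ≤ 1 + z := by linarith
  have hC0 : 0 ≤ C := by simpa using (exp_pos _).le.trans (hC 0 le_rfl)
  calc t.1 ^ β * exp (-(t.2 ^ 2) / t.1) * (1 + z)
      ≤ t.1 ^ β * (C * (1 + z) ^ (β - 1)) * (1 + z) := by
        rw [neg_div]
        gcongr
        exact (hC z hz).trans (by gcongr; linarith)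
    _ = C * (t.1 ^ β * (1 + z) ^ β) := by
        rw [rpow_sub_one (by positivity)]; field_simp
    _ = C * rhoHeat t ^ β := by rw [rhoHeat_eq_mul ht, mul_rpow ht.le (by positivity)]

theorem rpow_mul_exp_neg_le_mul_rhoHeat_rpow {β : ℝ}
    (hC : ∀ z, 0 ≤ z → exp (-z) ≤ C * (1 + z) ^ α) (hαβ : α + 1 ≤ β) (ht : 0 < t.1) :
    t.1 ^ β * exp (-(t.2 ^ 2) / t.1) ≤ C * rhoHeat t ^ β := by
  refine le_trans ?_ (rpow_mul_exp_neg_mul_le_mul_rhoHeat_rpow hC hαβ ht)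
  exact le_mul_of_one_le_right (by positivity) (le_add_of_nonneg_right (by positivity))

theorem abs_gTilde0_le (hC : ∀ z, 0 ≤ z → exp (-z) ≤ C * (1 + z) ^ α) (hα : α + 1 ≤ χ)
    (ht : 0 < t.1) : |gTilde0 χ t| ≤ C * rhoHeat t ^ χ := by
  rw [gTilde0, if_pos ht, abs_of_nonneg (by positivity)]
  exact rpow_mul_exp_neg_le_mul_rhoHeat_rpow hC hα ht

theorem abs_deriv_fst_gTilde0_le (hC : ∀ z, 0 ≤ z → exp (-z) ≤ C * (1 + z) ^ α)
    (hα : α + 2 ≤ χ) (ht : 0 < t.1) :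
    |deriv (fun x => gTilde0 χ (x, t.2)) t.1| ≤ (|χ| + 1) * C * rhoHeat t ^ (χ - 1) := by
  have hz : 0 ≤ t.2 ^ 2 / t.1 := by positivity
  rw [(hasDerivAt_gTilde0_fst χ t.2 ht).deriv, abs_mul, abs_of_nonneg (by positivity)]
  calc t.1 ^ (χ - 1) * exp (-(t.2 ^ 2) / t.1) * |χ + t.2 ^ 2 / t.1|
      ≤ t.1 ^ (χ - 1) * exp (-(t.2 ^ 2) / t.1) * ((|χ| + 1) * (1 + t.2 ^ 2 / t.1)) := by
        gcongr; exact abs_add_le_mul_one_add χ hz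
    _ = (|χ| + 1) * (t.1 ^ (χ - 1) * exp (-(t.2 ^ 2) / t.1) * (1 + t.2 ^ 2 / t.1)) := by ring
    _ ≤ (|χ| + 1) * (C * rhoHeat t ^ (χ - 1)) :=
        mul_le_mul_of_nonneg_left
          (rpow_mul_exp_neg_mul_le_mul_rhoHeat_rpow hC (by linarith) ht) (by positivity)
    _ = (|χ| + 1) * C * rhoHeat t ^ (χ - 1) := by ring

theorem abs_deriv_snd_gTilde0_le (hC : ∀ z, 0 ≤ z → exp (-z) ≤ C * (1 + z) ^ α)
    (hα : α + 2 ≤ χ) (ht : 0 < t.1) :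
    |deriv (fun y => gTilde0 χ (t.1, y)) t.2| ≤ 2 * C * rhoHeat t ^ (χ - 1 / 2) := by
  have hρ : 0 < rhoHeat t := by rw [rhoHeat_eq_mul ht]; positivity
  rw [(hasDerivAt_gTilde0_snd χ t.2 ht).deriv, abs_mul, abs_mul, abs_neg, abs_mul, abs_two,
    abs_of_nonneg (by positivity : (0 : ℝ) ≤ t.1 ^ (χ - 1)), abs_of_nonneg (exp_pos _).le]
  calc 2 * |t.2| * t.1 ^ (χ - 1) * exp (-(t.2 ^ 2) / t.1)
      = 2 * |t.2| * (t.1 ^ (χ - 1) * exp (-(t.2 ^ 2) / t.1)) := by ring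
    _ ≤ 2 * rhoHeat t ^ (1 / 2 : ℝ) * (C * rhoHeat t ^ (χ - 1)) :=
        mul_le_mul (by gcongr; exact abs_snd_le_rhoHeat_rpow_half t)
          (rpow_mul_exp_neg_le_mul_rhoHeat_rpow hC (by linarith) ht) (by positivity)
          (by positivity)
    _ = 2 * C * rhoHeat t ^ (χ - 1 / 2) := by
        rw [show χ - 1 / 2 = 1 / 2 + (χ - 1) by ring, rpow_add hρ]; ring

theorem abs_deriv_snd_deriv_fst_gTilde0_le (hC : ∀ z, 0 ≤ z → exp (-z) ≤ C * (1 + z) ^ α)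
    (hα : α + 3 ≤ χ) (ht : 0 < t.1) :
    |deriv (fun y => deriv (fun x => gTilde0 χ (x, y)) t.1) t.2|
      ≤ 2 * (|χ - 1| + 1) * C * rhoHeat t ^ (χ - 3 / 2) := by
  have hz : 0 ≤ t.2 ^ 2 / t.1 := by positivity
  have hρ : 0 < rhoHeat t := by rw [rhoHeat_eq_mul ht]; positivity
  rw [(hasDerivAt_deriv_gTilde0_fst_snd χ t.2 ht).deriv, abs_mul, abs_mul, abs_mul, abs_mul,
    abs_two, abs_of_nonneg (by positivity : (0 : ℝ) ≤ t.1 ^ (χ - 2)),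
    abs_of_nonneg (exp_pos _).le, show 1 - χ - t.2 ^ 2 / t.1 = -((χ - 1) + t.2 ^ 2 / t.1) by ring,
    abs_neg]
  calc 2 * |t.2| * t.1 ^ (χ - 2) * exp (-(t.2 ^ 2) / t.1) * |χ - 1 + t.2 ^ 2 / t.1|
      ≤ 2 * |t.2| * t.1 ^ (χ - 2) * exp (-(t.2 ^ 2) / t.1) *
          ((|χ - 1| + 1) * (1 + t.2 ^ 2 / t.1)) := by
        gcongr; exact abs_add_le_mul_one_add (χ - 1) hz
    _ = 2 * (|χ - 1| + 1) * |t.2| *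
          (t.1 ^ (χ - 2) * exp (-(t.2 ^ 2) / t.1) * (1 + t.2 ^ 2 / t.1)) := by ring
    _ ≤ 2 * (|χ - 1| + 1) * rhoHeat t ^ (1 / 2 : ℝ) * (C * rhoHeat t ^ (χ - 2)) :=
        mul_le_mul (by gcongr; exact abs_snd_le_rhoHeat_rpow_half t)
          (rpow_mul_exp_neg_mul_le_mul_rhoHeat_rpow hC (by linarith) ht) (by positivity)
          (by positivity)
    _ = 2 * (|χ - 1| + 1) * C * rhoHeat t ^ (χ - 3 / 2) := by
        rw [show χ - 3 / 2 = 1 / 2 + (χ - 2) by ring, rpow_add hρ]; ring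

end Bounds

theorem stmt_7 (χ : ℝ) :
    ∃ C : ℝ, 0 < C ∧ ∀ t : ℝ × ℝ, 0 < t.1 →
      |gTilde0 χ t| ≤ C * rhoHeat t ^ χ ∧
      |deriv (fun x => gTilde0 χ (x, t.2)) t.1| ≤ C * rhoHeat t ^ (χ - 1) ∧
      |deriv (fun y => gTilde0 χ (t.1, y)) t.2| ≤ C * rhoHeat t ^ (χ - 1 / 2) ∧
      |deriv (fun y => deriv (fun x => gTilde0 χ (x, y)) t.1) t.2|
        ≤ C * rhoHeat t ^ (χ - 3 / 2) := by
  obtain ⟨C, hC0, hC⟩ := exp_neg_le_mul_one_add_rpow (χ - 3)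
  have hχ : |χ - 1| ≤ |χ| + 1 := by simpa using abs_sub χ 1
  have hχ0 := abs_nonneg χ
  set K := 2 * (|χ| + 2)
  refine ⟨K * C, by positivity, fun t ht => ?_⟩
  have enlarge : ∀ {a k β : ℝ}, k ≤ K → a ≤ k * C * rhoHeat t ^ β → a ≤ K * C * rhoHeat t ^ β :=
    fun hk ha => ha.trans (by gcongr; exact rpow_nonneg (by unfold rhoHeat; positivity) _)
  refine ⟨?_, ?_, ?_, ?_⟩
  · exact enlarge (k := 1) (by linarith) (by simpa using abs_gTilde0_le hC (by linarith) ht)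
  · exact enlarge (by linarith) (abs_deriv_fst_gTilde0_le hC (by linarith) ht)
  · exact enlarge (by linarith) (abs_deriv_snd_gTilde0_le hC (by linarith) ht)
  · exact enlarge (by linarith) (abs_deriv_snd_deriv_fst_gTilde0_le hC (by linarith) ht)
end

section
/- Let χ > −3/4 and c1, c2 > 0. Define g(t) = [t1^χ / (2^{1/2}(2π)^{3/2} c2 Γ(χ+3/2))]·exp(−c1 t1 − t2²/(4 c2² t1))·1{t1 > 0}. Then for every x = (x1,x2) ∈ ℝ², ∫_{ℝ²} g(t) e^{i t·x} dt = (1/(2π))·(x1² + (c1 + c2² x2²)²)^{−(χ+3/2)/2}·exp(i(χ+3/2)·arctan(x1/(c1 + c2² x2²))). In particular |∫_{ℝ²} g(t) e^{i t·x} dt|² = (1/(2π)²)·(x1² + (c1 + c2² x2²)²)^{−(χ+3/2)}. -/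
open Real MeasureTheory

/-- The fractional heat kernel
`g(t) = t₁^χ/(2^{1/2}(2π)^{3/2} c₂ Γ(χ+3/2)) · e^{-c₁t₁ - t₂²/(4c₂²t₁)}` for `t₁ > 0`. -/
noncomputable def gFHK (χ c1 c2 : ℝ) (t : ℝ × ℝ) : ℝ :=
  if 0 < t.1 then
    t.1 ^ χ / ((2 : ℝ) ^ ((1 : ℝ) / 2) * (2 * π) ^ ((3 : ℝ) / 2) * c2 * Real.Gamma (χ + 3 / 2))
      * Real.exp (-c1 * t.1 - t.2 ^ 2 / (4 * c2 ^ 2 * t.1))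
  else 0

/-!
Integrating first in `t₂`: the Gaussian `e^{-t₂²/(4c₂²t₁)}` has Fourier transform
`2c₂√(πt₁) e^{-c₂²x₂²t₁}`, so for `t₁ > 0` the `t₂`-integral is `t₁^{s-1} e^{-z t₁} / (2πΓ(s))`
with `s = χ + 3/2` and `z = c₁ + c₂²x₂² - i x₁`. The `t₁`-integral is then the Gamma integral
`Γ(s) z^{-s}`, valid for `Re z > 0` by analytic continuation from real `z`, and the polar form of
`z`, with `|z|² = x₁² + (c₁ + c₂²x₂²)²` and `arg z = -arctan (x₁ / (c₁ + c₂²x₂²))`, gives the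
formula and its modulus.
-/

open Set Filter Complex Topology

section GammaIntegral

variable {s z : ℂ}

lemma norm_cpow_mul_cexp_neg_mul {t : ℝ} (ht : 0 < t) :
    ‖(t : ℂ) ^ (s - 1) * cexp (-(z * t))‖ = t ^ (s.re - 1) * Real.exp (-(z.re * t)) := by
  rw [norm_mul, norm_cpow_eq_rpow_re_of_pos ht, Complex.norm_exp]
  simp

lemma aestronglyMeasurable_cpow_mul_cexp_neg_mul (s z : ℂ) :
    AEStronglyMeasurable (fun t : ℝ => (t : ℂ) ^ (s - 1) * cexp (-(z * t)))
      (volume.restrict (Ioi 0)) := by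
  refine ContinuousOn.aestronglyMeasurable (fun t ht => ?_) measurableSet_Ioi
  exact ((continuousAt_ofReal_cpow_const t _ (Or.inr (ne_of_gt ht))).mul
    (by fun_prop)).continuousWithinAt

lemma integrableOn_cpow_mul_cexp_neg_mul_Ioi (hs : 0 < s.re) (hz : 0 < z.re) :
    IntegrableOn (fun t : ℝ => (t : ℂ) ^ (s - 1) * cexp (-(z * t))) (Ioi 0) := by
  have hbound : IntegrableOn (fun t : ℝ => t ^ (s.re - 1) * Real.exp (-(z.re * t))) (Ioi 0) := by
    simpa using integrableOn_rpow_mul_exp_neg_mul_rpow (s := s.re - 1) (by linarith) one_pos hz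
  refine hbound.mono' (aestronglyMeasurable_cpow_mul_cexp_neg_mul s z) ?_
  filter_upwards [ae_restrict_mem measurableSet_Ioi] with t ht
  exact (norm_cpow_mul_cexp_neg_mul ht).le

lemma differentiableAt_integral_cpow_mul_cexp_neg_mul (hs : 0 < s.re) (hz : 0 < z.re) :
    DifferentiableAt ℂ (fun w => ∫ t : ℝ in Ioi 0, (t : ℂ) ^ (s - 1) * cexp (-(w * t))) z := by
  have hz2 : 0 < z.re / 2 := half_pos hz
  refine (hasDerivAt_integral_of_dominated_loc_of_deriv_le
    (F' := fun w (t : ℝ) => (t : ℂ) ^ (s - 1) * (cexp (-(w * t)) * -t))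
    (bound := fun t => t ^ s.re * Real.exp (-(z.re / 2 * t)))
    (Metric.ball_mem_nhds z hz2)
    (Eventually.of_forall fun w => aestronglyMeasurable_cpow_mul_cexp_neg_mul s w)
    (integrableOn_cpow_mul_cexp_neg_mul_Ioi hs hz) ?_ ?_ ?_ ?_).2.differentiableAt
  · refine ContinuousOn.aestronglyMeasurable (fun t ht => ?_) measurableSet_Ioi
    exact ((continuousAt_ofReal_cpow_const t _ (Or.inr (ne_of_gt ht))).mul
      (by fun_prop)).continuousWithinAt
  · filter_upwards [ae_restrict_mem measurableSet_Ioi] with t (ht : 0 < t) w hw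
    have hw_re : z.re / 2 ≤ w.re := by
      have := (abs_re_le_norm (w - z)).trans_lt (mem_ball_iff_norm.mp hw)
      rw [sub_re, abs_lt] at this
      linarith
    rw [← mul_assoc, norm_mul, norm_cpow_mul_cexp_neg_mul ht, norm_neg, norm_real,
      Real.norm_of_nonneg ht.le, mul_right_comm, ← rpow_add_one ht.ne', sub_add_cancel]
    gcongr
  · have hbound : IntegrableOn (fun t : ℝ => t ^ s.re * Real.exp (-(z.re / 2 * t))) (Ioi 0) := by
      simpa using integrableOn_rpow_mul_exp_neg_mul_rpow (s := s.re) (by linarith) one_pos hz2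
    exact hbound
  · filter_upwards [ae_restrict_mem measurableSet_Ioi] with t _ w _
    have hrate : HasDerivAt (fun w : ℂ => -(w * t)) (-t) w := by
      simpa [mul_neg] using hasDerivAt_mul_const (x := w) (-(t : ℂ))
    exact hrate.cexp.const_mul _

lemma frequently_ofReal_pos_nhdsNE_one : ∃ᶠ w : ℂ in 𝓝[≠] 1, ∃ r : ℝ, 0 < r ∧ w = r := by
  have hlim : Tendsto ((↑) : ℝ → ℂ) (𝓝[>] 1) (𝓝[≠] 1) :=
    tendsto_nhdsWithin_of_tendsto_nhds_of_eventually_within _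
      (by simpa using (continuous_ofReal.tendsto (1 : ℝ)).mono_left nhdsWithin_le_nhds)
      (eventually_nhdsWithin_of_forall fun r (hr : 1 < r) => by
        simpa [← ofReal_one] using hr.ne')
  exact hlim.frequently (Eventually.frequently
    (eventually_nhdsWithin_of_forall fun r (hr : 1 < r) => ⟨r, by linarith, rfl⟩))

-- `Complex.integral_cpow_mul_exp_neg_mul_Ioi` continued analytically from real `z` to `0 < z.re`
theorem integral_cpow_mul_cexp_neg_mul_Ioi (hs : 0 < s.re) (hz : 0 < z.re) :
    ∫ t : ℝ in Ioi 0, (t : ℂ) ^ (s - 1) * cexp (-(z * t)) = Complex.Gamma s * z ^ (-s) := by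
  let U : Set ℂ := {w | 0 < w.re}
  have hU : IsOpen U := isOpen_lt continuous_const continuous_re
  have hlhs :
      AnalyticOnNhd ℂ (fun w => ∫ t : ℝ in Ioi 0, (t : ℂ) ^ (s - 1) * cexp (-(w * t))) U :=
    DifferentiableOn.analyticOnNhd (fun w hw =>
      (differentiableAt_integral_cpow_mul_cexp_neg_mul hs hw).differentiableWithinAt) hU
  have hrhs : AnalyticOnNhd ℂ (fun w => Complex.Gamma s * w ^ (-s)) U :=
    DifferentiableOn.analyticOnNhd (fun w (hw : 0 < w.re) => ((differentiableAt_id.cpow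
      (differentiableAt_const (-s)) (Or.inl hw)).const_mul _).differentiableWithinAt) hU
  refine hlhs.eqOn_of_preconnected_of_frequently_eq hrhs
    (convex_halfSpace_re_gt 0).isPreconnected (z₀ := 1) (by simp [U]) ?_ hz
  refine frequently_ofReal_pos_nhdsNE_one.mono ?_
  rintro _ ⟨r, hr, rfl⟩
  rw [integral_cpow_mul_exp_neg_mul_Ioi hs hr, mul_comm, one_div,
    inv_cpow _ _ (by rw [arg_ofReal_of_nonneg hr.le]; exact pi_ne_zero.symm), cpow_neg]

end GammaIntegral

lemma Complex.arg_eq_arctan_of_re_pos {z : ℂ} (hz : 0 < z.re) :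
    arg z = Real.arctan (z.im / z.re) := by
  obtain ⟨h1, h2⟩ := abs_lt.mp (abs_arg_lt_pi_div_two_iff.mpr (Or.inl hz))
  rw [← tan_arg, Real.arctan_tan h1 h2]

lemma ofReal_sub_mul_I_cpow_neg (s : ℝ) {a : ℝ} (ha : 0 < a) (b : ℝ) :
    ((a : ℂ) - b * I) ^ (-(s : ℂ)) =
      ((b ^ 2 + a ^ 2) ^ (-s / 2) : ℝ) * cexp (I * (s * Real.arctan (b / a) : ℝ)) := by
  have hnorm : ‖(a : ℂ) - b * I‖ = √(b ^ 2 + a ^ 2) := by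
    rw [sub_eq_add_neg, ← neg_mul, ← ofReal_neg, norm_add_mul_I, neg_sq, add_comm]
  have harg : arg ((a : ℂ) - b * I) = -Real.arctan (b / a) := by
    rw [arg_eq_arctan_of_re_pos (by simpa using ha)]; simp [neg_div]
  rw [← ofReal_neg, cpow_ofReal, hnorm, harg, mul_comm I, exp_mul_I, sqrt_eq_rpow,
    ← rpow_mul (by positivity)]
  push_cast
  ring_nf

lemma integral_ofReal_exp_neg_mul_sq_mul_cexp {b : ℝ} (hb : 0 < b) (ξ : ℝ) :
    ∫ x : ℝ, (Real.exp (-b * x ^ 2) : ℂ) * cexp (I * ξ * x) =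
      (√(π / b) * Real.exp (-ξ ^ 2 / (4 * b)) : ℝ) := by
  have hb' : 0 < (b : ℂ).re := by simpa using hb
  simp_rw [mul_comm (Complex.ofReal _), ofReal_exp]
  push_cast
  rw [fourierIntegral_gaussian hb', ← ofReal_div, ← ofReal_ofNat, ← ofReal_one, ← ofReal_div,
    ← ofReal_cpow (by positivity), sqrt_eq_rpow]

lemma two_rpow_half_mul_two_pi_rpow_three_halves :
    (2 : ℝ) ^ ((1 : ℝ) / 2) * (2 * π) ^ ((3 : ℝ) / 2) = 4 * π * √π := by
  rw [mul_rpow zero_le_two pi_pos.le, ← mul_assoc, ← rpow_add zero_lt_two,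
    show (3 : ℝ) / 2 = 1 + 1 / 2 by norm_num, rpow_add pi_pos, rpow_one, ← sqrt_eq_rpow]
  norm_num
  ring

section FractionalHeatKernel

variable {χ c1 c2 : ℝ}

lemma gFHK_of_pos {t1 : ℝ} (ht1 : 0 < t1) (t2 : ℝ) :
    gFHK χ c1 c2 (t1, t2) = t1 ^ χ * Real.exp (-c1 * t1) /
      (4 * π * √π * c2 * Real.Gamma (χ + 3 / 2)) * Real.exp (-(4 * c2 ^ 2 * t1)⁻¹ * t2 ^ 2) := by
  rw [gFHK, if_pos ht1, two_rpow_half_mul_two_pi_rpow_three_halves, sub_eq_add_neg, Real.exp_add]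
  ring_nf

lemma gFHK_of_nonpos {t1 : ℝ} (ht1 : t1 ≤ 0) (t2 : ℝ) : gFHK χ c1 c2 (t1, t2) = 0 :=
  if_neg ht1.not_gt

@[fun_prop]
lemma measurable_gFHK : Measurable (gFHK χ c1 c2) :=
  Measurable.ite (measurableSet_lt measurable_const measurable_fst) (by fun_prop) measurable_const

lemma integral_gFHK_mul_cexp_snd (hc2 : 0 < c2) {t1 : ℝ} (ht1 : 0 < t1) (ξ : ℝ) :
    ∫ t2 : ℝ, (gFHK χ c1 c2 (t1, t2) : ℂ) * cexp (I * ξ * t2) =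
      (t1 ^ (χ + 1 / 2) * Real.exp (-((c1 + c2 ^ 2 * ξ ^ 2) * t1)) /
        (2 * π * Real.Gamma (χ + 3 / 2)) : ℝ) := by
  have hb : 0 < (4 * c2 ^ 2 * t1)⁻¹ := by positivity
  simp_rw [gFHK_of_pos ht1, ofReal_mul (_ / _) (Real.exp _), mul_assoc ((_ / _ : ℝ) : ℂ),
    integral_const_mul]
  rw [integral_ofReal_exp_neg_mul_sq_mul_cexp hb, ← ofReal_mul]
  congr 1
  have hgauss : -ξ ^ 2 / (4 * (4 * c2 ^ 2 * t1)⁻¹) = -(c2 ^ 2 * ξ ^ 2 * t1) := by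
    field_simp
  rw [div_inv_eq_mul, show π * (4 * c2 ^ 2 * t1) = (2 * c2) ^ 2 * (π * t1) by ring,
    sqrt_mul (by positivity), sqrt_sq (by positivity), sqrt_mul pi_pos.le, hgauss,
    rpow_add ht1, ← sqrt_eq_rpow,
    show -((c1 + c2 ^ 2 * ξ ^ 2) * t1) = -c1 * t1 + -(c2 ^ 2 * ξ ^ 2 * t1) by ring, Real.exp_add]
  field_simp
  norm_num

lemma integral_gFHK_snd (hc2 : 0 < c2) {t1 : ℝ} (ht1 : 0 < t1) :
    ∫ t2 : ℝ, gFHK χ c1 c2 (t1, t2) =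
      t1 ^ (χ + 1 / 2) * Real.exp (-c1 * t1) / (2 * π * Real.Gamma (χ + 3 / 2)) := by
  have hfourier := integral_gFHK_mul_cexp_snd (c1 := c1) (χ := χ) hc2 ht1 0
  simp only [ofReal_zero, zero_pow two_ne_zero, mul_zero, add_zero, zero_mul, Complex.exp_zero,
    mul_one, integral_complex_ofReal, ofReal_inj] at hfourier
  rwa [neg_mul]

lemma gFHK_nonneg (hχ : -(3 / 2) ≤ χ) (hc2 : 0 ≤ c2) (t : ℝ × ℝ) : 0 ≤ gFHK χ c1 c2 t := by
  unfold gFHK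
  split_ifs with ht
  · have := Real.Gamma_nonneg_of_nonneg (s := χ + 3 / 2) (by linarith)
    positivity
  · rfl

lemma integrable_gFHK (hχ : -(3 / 2) < χ) (hc1 : 0 < c1) (hc2 : 0 < c2) :
    Integrable (gFHK χ c1 c2) := by
  rw [Measure.volume_eq_prod, integrable_prod_iff measurable_gFHK.aestronglyMeasurable]
  constructor
  · refine Eventually.of_forall fun t1 => ?_
    rcases lt_or_ge 0 t1 with ht1 | ht1
    · simp_rw [gFHK_of_pos ht1]
      exact (integrable_exp_neg_mul_sq (by positivity)).const_mul _
    · simp_rw [gFHK_of_nonpos ht1]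
      exact integrable_zero _ _ _
  · have hsection : (fun t1 => ∫ t2, ‖gFHK χ c1 c2 (t1, t2)‖) = (Ioi 0).indicator
        fun t1 => t1 ^ (χ + 1 / 2) * Real.exp (-c1 * t1) / (2 * π * Real.Gamma (χ + 3 / 2)) := by
      funext t1
      simp_rw [Real.norm_of_nonneg (gFHK_nonneg hχ.le hc2.le _)]
      rcases lt_or_ge 0 t1 with ht1 | ht1
      · rw [indicator_of_mem (mem_Ioi.mpr ht1), integral_gFHK_snd hc2 ht1]
      · rw [indicator_of_notMem (notMem_Ioi.mpr ht1)]
        simp [gFHK_of_nonpos ht1]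
    have hgamma :
        IntegrableOn (fun t1 : ℝ => t1 ^ (χ + 1 / 2) * Real.exp (-c1 * t1)) (Ioi 0) := by
      simpa using integrableOn_rpow_mul_exp_neg_mul_rpow (by linarith) one_pos hc1
    rw [hsection, integrable_indicator_iff measurableSet_Ioi]
    exact hgamma.div_const _

lemma integrable_gFHK_mul_cexp (hχ : -(3 / 2) < χ) (hc1 : 0 < c1) (hc2 : 0 < c2) (x1 x2 : ℝ) :
    Integrable fun t : ℝ × ℝ => (gFHK χ c1 c2 t : ℂ) * cexp (I * (t.1 * x1 + t.2 * x2 : ℝ)) := by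
  refine (integrable_gFHK hχ hc1 hc2).norm.mono' (by fun_prop)
    (Eventually.of_forall fun t => le_of_eq ?_)
  rw [norm_mul, norm_real, mul_comm I, norm_exp_ofReal_mul_I, mul_one]

lemma integral_gFHK_mul_cexp_of_pos (hc2 : 0 < c2) {t1 : ℝ} (ht1 : 0 < t1) (x1 x2 : ℝ) :
    ∫ t2 : ℝ, (gFHK χ c1 c2 (t1, t2) : ℂ) * cexp (I * (t1 * x1 + t2 * x2 : ℝ)) =
      (1 / (2 * π * Real.Gamma (χ + 3 / 2)) : ℝ) *
        ((t1 : ℂ) ^ ((χ + 3 / 2 : ℝ) - 1 : ℂ) *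
          cexp (-(((c1 + c2 ^ 2 * x2 ^ 2 : ℝ) - x1 * I) * t1))) := by
  have hsplit (t2 : ℝ) : cexp (I * (t1 * x1 + t2 * x2 : ℝ)) =
      cexp (I * (t1 * x1 : ℝ)) * cexp (I * x2 * t2) := by
    rw [← Complex.exp_add]; push_cast; ring_nf
  simp_rw [hsplit, mul_left_comm _ (cexp (I * (t1 * x1 : ℝ))), integral_const_mul,
    integral_gFHK_mul_cexp_snd hc2 ht1]
  rw [show ((χ + 3 / 2 : ℝ) : ℂ) - 1 = (χ + 1 / 2 : ℝ) by push_cast; ring, ← ofReal_cpow ht1.le,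
    show -((((c1 + c2 ^ 2 * x2 ^ 2 : ℝ) : ℂ) - x1 * I) * t1) =
      (-((c1 + c2 ^ 2 * x2 ^ 2) * t1) : ℝ) + I * (t1 * x1 : ℝ) by push_cast; ring,
    Complex.exp_add, ← ofReal_exp]
  push_cast
  ring

theorem integral_gFHK_mul_cexp (hχ : -(3 / 2) < χ) (hc1 : 0 < c1) (hc2 : 0 < c2) (x1 x2 : ℝ) :
    ∫ t : ℝ × ℝ, (gFHK χ c1 c2 t : ℂ) * cexp (I * (t.1 * x1 + t.2 * x2 : ℝ)) =
      (1 / (2 * π) : ℝ) * ((c1 + c2 ^ 2 * x2 ^ 2 : ℝ) - x1 * I) ^ (-((χ + 3 / 2 : ℝ) : ℂ)) := by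
  have hsection : (fun t1 => ∫ t2 : ℝ, (gFHK χ c1 c2 (t1, t2) : ℂ) *
      cexp (I * (t1 * x1 + t2 * x2 : ℝ))) = (Ioi 0).indicator fun t1 : ℝ =>
        (1 / (2 * π * Real.Gamma (χ + 3 / 2)) : ℝ) * ((t1 : ℂ) ^ ((χ + 3 / 2 : ℝ) - 1 : ℂ) *
          cexp (-(((c1 + c2 ^ 2 * x2 ^ 2 : ℝ) - x1 * I) * t1))) := by
    funext t1
    rcases lt_or_ge 0 t1 with ht1 | ht1
    · rw [indicator_of_mem (mem_Ioi.mpr ht1), integral_gFHK_mul_cexp_of_pos hc2 ht1]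
    · rw [indicator_of_notMem (notMem_Ioi.mpr ht1)]
      simp [gFHK_of_nonpos ht1]
  have hre : 0 < (((c1 + c2 ^ 2 * x2 ^ 2 : ℝ) : ℂ) - x1 * I).re := by
    rw [sub_re, ofReal_re, mul_I_re, ofReal_im, neg_zero, sub_zero]
    positivity
  rw [Measure.volume_eq_prod, integral_prod _ (integrable_gFHK_mul_cexp hχ hc1 hc2 x1 x2),
    hsection, integral_indicator measurableSet_Ioi, integral_const_mul,
    integral_cpow_mul_cexp_neg_mul_Ioi (by rw [ofReal_re]; linarith) hre, Gamma_ofReal, ← mul_assoc,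
    ← ofReal_mul]
  congr 2
  rw [div_mul_eq_mul_div, mul_div_mul_right _ _ (Real.Gamma_pos_of_pos (by linarith)).ne']

end FractionalHeatKernel

theorem stmt_10 (χ c1 c2 : ℝ) (hχ : -(3 / 4) < χ) (hc1 : 0 < c1) (hc2 : 0 < c2) :
    ∀ x : ℝ × ℝ,
      (∫ t : ℝ × ℝ, (gFHK χ c1 c2 t : ℂ) * Complex.exp (Complex.I * ((t.1 * x.1 + t.2 * x.2 : ℝ) : ℂ)))
        = ((1 / (2 * π) : ℝ) : ℂ)
            * (((x.1 ^ 2 + (c1 + c2 ^ 2 * x.2 ^ 2) ^ 2) ^ (-(χ + 3 / 2) / 2) : ℝ) : ℂ)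
            * Complex.exp (Complex.I * (((χ + 3 / 2) * Real.arctan (x.1 / (c1 + c2 ^ 2 * x.2 ^ 2)) : ℝ) : ℂ)) ∧
      ‖(∫ t : ℝ × ℝ, (gFHK χ c1 c2 t : ℂ)
            * Complex.exp (Complex.I * ((t.1 * x.1 + t.2 * x.2 : ℝ) : ℂ)))‖ ^ 2
        = (1 / (2 * π) ^ 2) * (x.1 ^ 2 + (c1 + c2 ^ 2 * x.2 ^ 2) ^ 2) ^ (-(χ + 3 / 2)) := by
  rintro ⟨x1, x2⟩
  have hformula := integral_gFHK_mul_cexp (χ := χ) (by linarith) hc1 hc2 x1 x2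
  rw [ofReal_sub_mul_I_cpow_neg _ (by positivity), ← mul_assoc] at hformula
  refine ⟨hformula, ?_⟩
  rw [hformula, norm_mul, norm_mul, norm_real, norm_real, mul_comm I, norm_exp_ofReal_mul_I,
    mul_one, Real.norm_of_nonneg (by positivity), Real.norm_of_nonneg (by positivity), mul_pow,
    div_pow, one_pow, ← rpow_mul_natCast (by positivity)]
  norm_num
end

section
/- Let 0 < α ≤ 2, p1, p2 > 0, P = 1/p1 + 1/p2 with α/(1+α) < P < α and P ≠ 1, and let g0 : ℝ²∖{0} → ℝ be measurable with |g0(u)| ≤ C ρ0(u)^{P−1} and |∂_{12} g0(u)| ≤ C ρ0(u)^{−1} for all u ≠ 0, where ρ0(u) = |u1|^{p1} + |u2|^{p2}. Then for every t ∈ (0,∞)², the rectangular increment h0(t;u) := g0(t1−u1, t2−u2) − g0(−u1, t2−u2) − g0(t1−u1, −u2) + g0(−u1,−u2) satisfies ∫_{ℝ²} |h0(t;u)|^α du < ∞. -/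
/-!
Near the origin, `|h₀(t;u)|^α` is dominated by the four translates of
`|g₀|^α ≤ C^α ρ₀^{(P-1)α}`, and `ρ₀^β` is locally integrable for `β > -P`: for `β < 0`, weighted
AM-GM with weights `1/(p₁P)` and `1/(p₂P)` gives `ρ₀(x,y)^β ≤ |x|^{β/P} |y|^{β/P}`.

Far from the origin, the quasi-triangle inequality for `ρ₀` keeps `ρ₀` comparable to `ρ₀(u)` on
the whole rectangle `[-u, t-u]`, so the mean value inequality for `∂₁₂g₀` gives
`|h₀(t;u)| ≲ ρ₀(u)⁻¹`. The same AM-GM splitting bounds `(2 + ρ₀)^{-α}` by a product of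
one-dimensional functions decaying like `(1 + |x|)^{-α/P}`, which is integrable since `P < α`.
-/

open MeasureTheory

/-- `ρ₀(u) = |u₁|^{p₁} + |u₂|^{p₂}`. -/
noncomputable def rho0 (p1 p2 : ℝ) (u : ℝ × ℝ) : ℝ := |u.1| ^ p1 + |u.2| ^ p2

/-- Mixed partial derivative `∂₁₂ g`. -/
noncomputable def pd12 (g : ℝ × ℝ → ℝ) (u : ℝ × ℝ) : ℝ :=
  deriv (fun b => deriv (fun a => g (a, b)) u.1) u.2

open Set Filter Topology Asymptotics

lemma abs_add_rpow_le {p : ℝ} (hp : 0 ≤ p) (x y : ℝ) :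
    |x + y| ^ p ≤ 2 ^ p * (|x| ^ p + |y| ^ p) := by
  wlog hxy : |x| ≤ |y| generalizing x y
  · simpa only [add_comm] using this y x (le_of_not_ge hxy)
  calc |x + y| ^ p ≤ (2 * |y|) ^ p :=
        Real.rpow_le_rpow (abs_nonneg _) ((abs_add_le x y).trans (by linarith)) hp
    _ = 2 ^ p * |y| ^ p := Real.mul_rpow zero_le_two (abs_nonneg y)
    _ ≤ 2 ^ p * (|x| ^ p + |y| ^ p) := by
        gcongr
        exact le_add_of_nonneg_left (by positivity)

lemma abs_sub_sub_add_rpow_le {p : ℝ} (hp : 0 ≤ p) (a b c d : ℝ) :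
    |a - b - c + d| ^ p ≤ 4 ^ p * (|a| ^ p + |b| ^ p + |c| ^ p + |d| ^ p) := by
  have hsub : ∀ x y : ℝ, |x - y| ^ p ≤ 2 ^ p * (|x| ^ p + |y| ^ p) := fun x y => by
    simpa only [sub_eq_add_neg, abs_neg] using abs_add_rpow_le hp x (-y)
  have h4 : (4 : ℝ) ^ p = 2 ^ p * 2 ^ p := by
    rw [← Real.mul_rpow zero_le_two zero_le_two]; norm_num
  calc |a - b - c + d| ^ p = |(a - b) + (d - c)| ^ p := by ring_nf
    _ ≤ 2 ^ p * (|a - b| ^ p + |d - c| ^ p) := abs_add_rpow_le hp _ _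
    _ ≤ 2 ^ p * (2 ^ p * (|a| ^ p + |b| ^ p) + 2 ^ p * (|d| ^ p + |c| ^ p)) := by
        gcongr <;> apply hsub
    _ = 4 ^ p * (|a| ^ p + |b| ^ p + |c| ^ p + |d| ^ p) := by rw [h4]; ring

lemma add_rpow_le_rpow_mul_rpow_of_nonpos {a b w₁ w₂ β : ℝ} (ha : 0 < a) (hb : 0 < b)
    (hw₁ : 0 ≤ w₁) (hw₂ : 0 ≤ w₂) (hw : w₁ + w₂ = 1) (hβ : β ≤ 0) :
    (a + b) ^ β ≤ a ^ (w₁ * β) * b ^ (w₂ * β) := by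
  have hgm : a ^ w₁ * b ^ w₂ ≤ a + b :=
    (Real.geom_mean_le_arith_mean2_weighted hw₁ hw₂ ha.le hb.le hw).trans
      (by nlinarith [mul_nonneg hw₁ ha.le, mul_nonneg hw₂ hb.le])
  calc (a + b) ^ β ≤ (a ^ w₁ * b ^ w₂) ^ β :=
        Real.rpow_le_rpow_of_nonpos (by positivity) hgm hβ
    _ = a ^ (w₁ * β) * b ^ (w₂ * β) := by
        rw [Real.mul_rpow (by positivity) (by positivity), Real.rpow_mul ha.le,
          Real.rpow_mul hb.le]

lemma locallyIntegrable_abs_rpow {γ : ℝ} (hγ : -1 < γ) :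
    LocallyIntegrable (fun x : ℝ => |x| ^ γ) :=
  locallyIntegrable_of_norm_le_rpow (C := 1) (α := -γ) (by simp) (by simpa using neg_lt.1 hγ)
    (.of_forall fun x => by simp [abs_of_nonneg (Real.rpow_nonneg (abs_nonneg x) γ)])
    (measurable_abs.pow_const γ).aestronglyMeasurable

lemma integrable_one_add_abs_rpow_rpow_neg {p r : ℝ} (hp : 0 < p) (hr : 1 < r) :
    Integrable (fun x : ℝ => (1 + |x| ^ p) ^ (-(r / p))) := by
  refine ((integrable_one_add_norm (E := ℝ) (r := r) (by simpa using hr)).const_mul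
    (2 ^ r)).mono' ((measurable_const.add (measurable_abs.pow_const p)).pow_const
      _).aestronglyMeasurable (.of_forall fun x => ?_)
  have hpos : 0 < 1 + |x| ^ p := by positivity
  have hpos' : 0 < 1 + |x| := by positivity
  have hbr : (1 + |x|) ^ p ≤ 2 ^ p * (1 + |x| ^ p) := by
    have := abs_add_rpow_le hp.le 1 |x|
    rwa [abs_one, Real.one_rpow, abs_abs, abs_of_pos hpos'] at this
  rw [Real.norm_eq_abs, abs_of_pos (Real.rpow_pos_of_pos hpos _)]
  calc (1 + |x| ^ p) ^ (-(r / p))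
      = 2 ^ r * (2 ^ p * (1 + |x| ^ p)) ^ (-(r / p)) := by
        rw [Real.mul_rpow (by positivity) hpos.le, ← Real.rpow_mul zero_le_two,
          ← mul_assoc, ← Real.rpow_add zero_lt_two]
        field_simp
        simp
    _ ≤ 2 ^ r * ((1 + |x|) ^ p) ^ (-(r / p)) := by
        refine mul_le_mul_of_nonneg_left ?_ (by positivity)
        exact Real.rpow_le_rpow_of_nonpos (by positivity) hbr
          (neg_nonpos.2 (div_nonneg (by linarith) hp.le))
    _ = 2 ^ r * (1 + |x|) ^ (-r) := by
        rw [← Real.rpow_mul (by positivity)]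
        field_simp

lemma LocallyIntegrable.mul_prod {X Y L : Type*} [TopologicalSpace X] [TopologicalSpace Y]
    [MeasurableSpace X] [MeasurableSpace Y] [NormedRing L] {μ : Measure X} {ν : Measure Y}
    [SFinite μ] [SFinite ν] {f : X → L} {g : Y → L}
    (hf : LocallyIntegrable f μ) (hg : LocallyIntegrable g ν) :
    LocallyIntegrable (fun z : X × Y => f z.1 * g z.2) (μ.prod ν) := by
  intro z
  obtain ⟨U, hU, hfU⟩ := hf z.1
  obtain ⟨V, hV, hgV⟩ := hg z.2
  refine ⟨U ×ˢ V, prod_mem_nhds hU hV, ?_⟩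
  rw [IntegrableOn, ← Measure.prod_restrict]
  exact hfU.mul_prod hgV

lemma LocallyIntegrable.comp_sub_left {G E : Type*} [AddGroup G] [TopologicalSpace G]
    [IsTopologicalAddGroup G] [MeasurableSpace G] [BorelSpace G] [NormedAddCommGroup E]
    {μ : Measure G} [μ.IsAddLeftInvariant] [μ.IsNegInvariant] {f : G → E}
    (hf : LocallyIntegrable f μ) (c : G) : LocallyIntegrable (fun x => f (c - x)) μ := by
  rw [← (μ.measurePreserving_sub_left c).map_eq] at hf
  exact (locallyIntegrable_map_homeomorph (Homeomorph.subLeft c)).1 hf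

section Rho0

variable {p1 p2 : ℝ}

lemma rho0_nonneg (u : ℝ × ℝ) : 0 ≤ rho0 p1 p2 u := by
  unfold rho0; positivity

lemma continuous_rho0 (hp1 : 0 ≤ p1) (hp2 : 0 ≤ p2) : Continuous (rho0 p1 p2) :=
  ((continuous_abs.comp continuous_fst).rpow_const fun _ => Or.inr hp1).add
    ((continuous_abs.comp continuous_snd).rpow_const fun _ => Or.inr hp2)

lemma rho0_add_le (hp1 : 0 ≤ p1) (hp2 : 0 ≤ p2) (a b : ℝ × ℝ) :
    rho0 p1 p2 (a + b) ≤ (2 ^ p1 + 2 ^ p2) * (rho0 p1 p2 a + rho0 p1 p2 b) := by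
  have h1 := abs_add_rpow_le hp1 a.1 b.1
  have h2 := abs_add_rpow_le hp2 a.2 b.2
  have : 0 ≤ 2 ^ p1 * (|a.2| ^ p2 + |b.2| ^ p2) + 2 ^ p2 * (|a.1| ^ p1 + |b.1| ^ p1) := by
    positivity
  simp only [rho0, Prod.fst_add, Prod.snd_add]
  linarith

lemma rho0_le_of_mem_rect (hp1 : 0 ≤ p1) (hp2 : 0 ≤ p2) {t u v : ℝ × ℝ}
    (hv : v ∈ Icc (-u.1) (t.1 - u.1) ×ˢ Icc (-u.2) (t.2 - u.2)) :
    rho0 p1 p2 u ≤ (2 ^ p1 + 2 ^ p2) * (rho0 p1 p2 v + rho0 p1 p2 t) := by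
  obtain ⟨⟨h1, h2⟩, h3, h4⟩ := hv
  have hshift : rho0 p1 p2 (u + v) ≤ rho0 p1 p2 t :=
    add_le_add
      (Real.rpow_le_rpow (abs_nonneg _) (abs_le_abs (by simp; linarith) (by simp; linarith)) hp1)
      (Real.rpow_le_rpow (abs_nonneg _) (abs_le_abs (by simp; linarith) (by simp; linarith)) hp2)
  have hneg : rho0 p1 p2 (-v) = rho0 p1 p2 v := by simp [rho0]
  calc rho0 p1 p2 u = rho0 p1 p2 ((u + v) + -v) := by rw [add_neg_cancel_right]
    _ ≤ (2 ^ p1 + 2 ^ p2) * (rho0 p1 p2 (u + v) + rho0 p1 p2 (-v)) := rho0_add_le hp1 hp2 _ _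
    _ ≤ (2 ^ p1 + 2 ^ p2) * (rho0 p1 p2 v + rho0 p1 p2 t) := by
        rw [hneg, add_comm (rho0 p1 p2 v)]
        gcongr

lemma rho0_rpow_le_mul_rpow (hp1 : 0 < p1) (hp2 : 0 < p2) {β : ℝ} (hβ : β ≤ 0) {x y : ℝ}
    (hx : x ≠ 0) (hy : y ≠ 0) :
    rho0 p1 p2 (x, y) ^ β ≤ |x| ^ (β / (1 / p1 + 1 / p2)) * |y| ^ (β / (1 / p1 + 1 / p2)) := by
  have h := add_rpow_le_rpow_mul_rpow_of_nonpos (a := |x| ^ p1) (b := |y| ^ p2)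
    (w₁ := 1 / p1 / (1 / p1 + 1 / p2)) (w₂ := 1 / p2 / (1 / p1 + 1 / p2))
    (by positivity) (by positivity) (by positivity) (by positivity) (by field_simp) hβ
  rw [← Real.rpow_mul (abs_nonneg x), ← Real.rpow_mul (abs_nonneg y)] at h
  rwa [show p1 * (1 / p1 / (1 / p1 + 1 / p2) * β) = β / (1 / p1 + 1 / p2) by field_simp,
    show p2 * (1 / p2 / (1 / p1 + 1 / p2) * β) = β / (1 / p1 + 1 / p2) by field_simp] at h

lemma locallyIntegrable_rho0_rpow (hp1 : 0 < p1) (hp2 : 0 < p2) {β : ℝ}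
    (hβ : -(1 / p1 + 1 / p2) < β) : LocallyIntegrable (fun u => rho0 p1 p2 u ^ β) := by
  rcases le_or_gt 0 β with hβ0 | hβ0
  · exact ((continuous_rho0 hp1.le hp2.le).rpow_const fun _ => Or.inr hβ0).locallyIntegrable
  have hγ : -1 < β / (1 / p1 + 1 / p2) := by rw [lt_div_iff₀ (by positivity)]; linarith
  have hprod : LocallyIntegrable (fun u : ℝ × ℝ =>
      |u.1| ^ (β / (1 / p1 + 1 / p2)) * |u.2| ^ (β / (1 / p1 + 1 / p2))) := by
    rw [Measure.volume_eq_prod]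
    exact LocallyIntegrable.mul_prod (locallyIntegrable_abs_rpow hγ)
      (locallyIntegrable_abs_rpow hγ)
  refine hprod.mono
    ((continuous_rho0 hp1.le hp2.le).measurable.pow_const β).aestronglyMeasurable ?_
  have hfst : ∀ᵐ u : ℝ × ℝ, u.1 ≠ 0 := by
    rw [Measure.volume_eq_prod]
    exact Measure.quasiMeasurePreserving_fst.ae (Measure.ae_ne volume 0)
  have hsnd : ∀ᵐ u : ℝ × ℝ, u.2 ≠ 0 := by
    rw [Measure.volume_eq_prod]
    exact Measure.quasiMeasurePreserving_snd.ae (Measure.ae_ne volume 0)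
  filter_upwards [hfst, hsnd] with u h1 h2
  rw [Real.norm_eq_abs, Real.norm_eq_abs, abs_of_nonneg (Real.rpow_nonneg (rho0_nonneg u) _),
    abs_of_nonneg (by positivity)]
  exact rho0_rpow_le_mul_rpow hp1 hp2 hβ0.le h1 h2

lemma tendsto_rho0_cocompact (hp1 : 0 < p1) (hp2 : 0 < p2) :
    Tendsto (rho0 p1 p2) (cocompact (ℝ × ℝ)) atTop := by
  have habs : Tendsto (fun x : ℝ => |x|) (cocompact ℝ) atTop :=
    tendsto_norm_cocompact_atTop.congr Real.norm_eq_abs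
  rw [← Filter.coprod_cocompact, Filter.coprod, tendsto_sup]
  constructor
  · exact tendsto_atTop_mono (fun u => le_add_of_nonneg_right (by positivity))
      (((tendsto_rpow_atTop hp1).comp habs).comp tendsto_comap)
  · exact tendsto_atTop_mono (fun u => le_add_of_nonneg_left (by positivity))
      (((tendsto_rpow_atTop hp2).comp habs).comp tendsto_comap)

lemma integrable_two_add_rho0_rpow_neg (hp1 : 0 < p1) (hp2 : 0 < p2) {α : ℝ}
    (hα : 1 / p1 + 1 / p2 < α) : Integrable (fun u => (2 + rho0 p1 p2 u) ^ (-α)) := by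
  set P := 1 / p1 + 1 / p2 with hPdef
  have hP : 0 < P := by positivity
  have hr : 1 < α / P := (one_lt_div hP).2 hα
  have hprod : Integrable (fun u : ℝ × ℝ =>
      (1 + |u.1| ^ p1) ^ (-(α / P / p1)) * (1 + |u.2| ^ p2) ^ (-(α / P / p2))) := by
    rw [Measure.volume_eq_prod]
    exact (integrable_one_add_abs_rpow_rpow_neg hp1 hr).mul_prod
      (integrable_one_add_abs_rpow_rpow_neg hp2 hr)
  refine hprod.mono' ((continuous_const.add (continuous_rho0 hp1.le hp2.le)).measurable.pow_const
    _).aestronglyMeasurable (.of_forall fun u => ?_)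
  have h := add_rpow_le_rpow_mul_rpow_of_nonpos (a := 1 + |u.1| ^ p1) (b := 1 + |u.2| ^ p2)
    (w₁ := 1 / p1 / P) (w₂ := 1 / p2 / P) (by positivity) (by positivity) (by positivity)
    (by positivity) (by rw [hPdef]; field_simp) (neg_nonpos.2 (hP.trans hα).le)
  rw [show 1 / p1 / P * -α = -(α / P / p1) by ring,
    show 1 / p2 / P * -α = -(α / P / p2) by ring,
    show 1 + |u.1| ^ p1 + (1 + |u.2| ^ p2) = 2 + rho0 p1 p2 u by simp only [rho0]; ring] at h
  have hρ := rho0_nonneg (p1 := p1) (p2 := p2) u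
  rwa [Real.norm_eq_abs, abs_of_nonneg (Real.rpow_nonneg (by linarith) _)]

lemma rho0_rpow_neg_isBigO (hp1 : 0 < p1) (hp2 : 0 < p2) {α : ℝ} (hα : 0 ≤ α) :
    (fun u => rho0 p1 p2 u ^ (-α)) =O[cocompact (ℝ × ℝ)]
      fun u => (2 + rho0 p1 p2 u) ^ (-α) := by
  refine IsBigO.of_bound (2 ^ α)
    (((tendsto_rho0_cocompact hp1 hp2).eventually_ge_atTop 2).mono fun u hu => ?_)
  have hρ : 0 < rho0 p1 p2 u := by linarith
  rw [Real.norm_eq_abs, Real.norm_eq_abs, abs_of_pos (Real.rpow_pos_of_pos hρ _),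
    abs_of_pos (Real.rpow_pos_of_pos (by linarith) _)]
  calc rho0 p1 p2 u ^ (-α) ≤ ((2 + rho0 p1 p2 u) / 2) ^ (-α) :=
        Real.rpow_le_rpow_of_nonpos (by positivity) (by linarith) (neg_nonpos.2 hα)
    _ = 2 ^ α * (2 + rho0 p1 p2 u) ^ (-α) := by
        rw [Real.div_rpow (by linarith) zero_le_two, Real.rpow_neg zero_le_two, div_inv_eq_mul,
          mul_comm]

end Rho0

section MixedPartial

variable {g : ℝ × ℝ → ℝ} {U : Set (ℝ × ℝ)}

lemma hasDerivAt_slice_fst {x y : ℝ} (hg : DifferentiableAt ℝ g (x, y)) :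
    HasDerivAt (fun x' => g (x', y)) (fderiv ℝ g (x, y) (1, 0)) x :=
  hg.hasFDerivAt.comp_hasDerivAt x ((hasDerivAt_id x).prodMk (hasDerivAt_const x y))

lemma hasDerivAt_fderiv_slice_snd (hU : IsOpen U) (hg : ContDiffOn ℝ 2 g U) {x y : ℝ}
    (hxy : (x, y) ∈ U) :
    HasDerivAt (fun y' => fderiv ℝ g (x, y') (1, 0)) (pd12 g (x, y)) y := by
  have hslice : Continuous fun y' : ℝ => (x, y') := continuous_const.prodMk continuous_id
  have hdiff : DifferentiableAt ℝ (fun y' => fderiv ℝ g (x, y') (1, 0)) y :=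
    ((((hg.fderiv_of_isOpen (m := 1) hU (by norm_num)).differentiableOn one_ne_zero _
      hxy).differentiableAt (hU.mem_nhds hxy)).comp y
      ((differentiableAt_const x).prodMk differentiableAt_id)).clm_apply (differentiableAt_const _)
  have hnear : (fun y' => deriv (fun x' => g (x', y')) x) =ᶠ[𝓝 y]
      fun y' => fderiv ℝ g (x, y') (1, 0) := by
    filter_upwards [hslice.continuousAt.preimage_mem_nhds (hU.mem_nhds hxy)] with y' hy'
    exact (hasDerivAt_slice_fst ((hg.differentiableOn (by norm_num) _ hy').differentiableAt
      (hU.mem_nhds hy'))).deriv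
  have hpd : pd12 g (x, y) = deriv (fun y' => fderiv ℝ g (x, y') (1, 0)) y := hnear.deriv_eq
  rw [hpd]
  exact hdiff.hasDerivAt

lemma abs_rect_increment_le (hU : IsOpen U) (hg : ContDiffOn ℝ 2 g U) {a b c d K : ℝ}
    (hab : a ≤ b) (hcd : c ≤ d) (hsub : Icc a b ×ˢ Icc c d ⊆ U)
    (hK : ∀ w ∈ Icc a b ×ˢ Icc c d, |pd12 g w| ≤ K) :
    |g (b, d) - g (a, d) - g (b, c) + g (a, c)| ≤ K * (d - c) * (b - a) := by
  set D₁ : ℝ × ℝ → ℝ := fun w => fderiv ℝ g w (1, 0)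
  have hgd : ∀ w ∈ U, DifferentiableAt ℝ g w := fun w hw =>
    (hg.differentiableOn (by norm_num) w hw).differentiableAt (hU.mem_nhds hw)
  have hD₁ : ∀ x ∈ Icc a b, |D₁ (x, d) - D₁ (x, c)| ≤ K * (d - c) := fun x hx =>
    norm_image_sub_le_of_norm_deriv_le_segment'
      (fun y hy => (hasDerivAt_fderiv_slice_snd hU hg (hsub ⟨hx, hy⟩)).hasDerivWithinAt)
      (fun y hy => hK _ ⟨hx, Ico_subset_Icc_self hy⟩) d (right_mem_Icc.2 hcd)
  have hmain := norm_image_sub_le_of_norm_deriv_le_segment' (f := fun x => g (x, d) - g (x, c))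
    (fun x hx => ((hasDerivAt_slice_fst (hgd _ (hsub ⟨hx, right_mem_Icc.2 hcd⟩))).sub
      (hasDerivAt_slice_fst (hgd _ (hsub ⟨hx, left_mem_Icc.2 hcd⟩)))).hasDerivWithinAt)
    (fun x hx => hD₁ x (Ico_subset_Icc_self hx)) b (right_mem_Icc.2 hab)
  rw [Real.norm_eq_abs] at hmain
  calc |g (b, d) - g (a, d) - g (b, c) + g (a, c)|
      = |g (b, d) - g (b, c) - (g (a, d) - g (a, c))| := by ring_nf
    _ ≤ K * (d - c) * (b - a) := hmain

end MixedPartial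

section RectIncrement

variable {g : ℝ × ℝ → ℝ} {p1 p2 C α : ℝ}

lemma locallyIntegrable_abs_rpow_of_abs_le_rho0_rpow {γ : ℝ} (hα : 0 ≤ α) (hC : 0 ≤ C)
    (hmeas : Measurable g) (hg : ∀ u, u ≠ 0 → |g u| ≤ C * rho0 p1 p2 u ^ γ)
    (hloc : LocallyIntegrable (fun u => rho0 p1 p2 u ^ (γ * α))) :
    LocallyIntegrable (fun u => |g u| ^ α) := by
  refine (LocallyIntegrable.smul hloc (C ^ α)).mono
    (hmeas.abs.pow_const α).aestronglyMeasurable ?_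
  filter_upwards [Measure.ae_ne volume (0 : ℝ × ℝ)] with u hu
  have hρ := rho0_nonneg (p1 := p1) (p2 := p2) u
  refine (Real.norm_of_nonneg (Real.rpow_nonneg (abs_nonneg _) _)).trans_le
    (le_trans ?_ (Real.le_norm_self _))
  calc |g u| ^ α ≤ (C * rho0 p1 p2 u ^ γ) ^ α := Real.rpow_le_rpow (abs_nonneg _) (hg u hu) hα
    _ = C ^ α * rho0 p1 p2 u ^ (γ * α) := by
        rw [Real.mul_rpow hC (Real.rpow_nonneg hρ _), ← Real.rpow_mul hρ]

lemma locallyIntegrable_rect_increment_rpow (hα : 0 ≤ α) (hmeas : Measurable g)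
    (hG : LocallyIntegrable (fun u => |g u| ^ α)) (t : ℝ × ℝ) :
    LocallyIntegrable (fun u : ℝ × ℝ => |g (t.1 - u.1, t.2 - u.2) - g (-u.1, t.2 - u.2)
      - g (t.1 - u.1, -u.2) + g (-u.1, -u.2)| ^ α) := by
  have hshift : ∀ c : ℝ × ℝ, LocallyIntegrable (fun u => |g (c - u)| ^ α) :=
    LocallyIntegrable.comp_sub_left hG
  have hsum := LocallyIntegrable.smul (LocallyIntegrable.add (LocallyIntegrable.add
    (LocallyIntegrable.add (hshift t) (hshift (0, t.2))) (hshift (t.1, 0))) (hshift 0))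
    ((4 : ℝ) ^ α)
  refine hsum.mono (by fun_prop) (.of_forall fun u => ?_)
  refine (Real.norm_of_nonneg (Real.rpow_nonneg (abs_nonneg _) _)).trans_le
    (le_trans ?_ (Real.le_norm_self _))
  have hsub : ∀ c : ℝ × ℝ, c - u = (c.1 - u.1, c.2 - u.2) := fun c => rfl
  simp only [Pi.smul_apply, Pi.add_apply, smul_eq_mul, hsub, zero_sub]
  exact abs_sub_sub_add_rpow_le hα _ _ _ _

lemma abs_rect_increment_le_of_rho0_le (hp1 : 0 < p1) (hp2 : 0 < p2) (hC : 0 ≤ C)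
    (hsm : ContDiffOn ℝ 2 g {0}ᶜ) (hD : ∀ u, u ≠ 0 → |pd12 g u| ≤ C * (rho0 p1 p2 u)⁻¹)
    {t u : ℝ × ℝ} (ht1 : 0 ≤ t.1) (ht2 : 0 ≤ t.2) (hu0 : 0 < rho0 p1 p2 u)
    (hu : 2 * (2 ^ p1 + 2 ^ p2) * rho0 p1 p2 t ≤ rho0 p1 p2 u) :
    |g (t.1 - u.1, t.2 - u.2) - g (-u.1, t.2 - u.2) - g (t.1 - u.1, -u.2) + g (-u.1, -u.2)|
      ≤ 2 * (2 ^ p1 + 2 ^ p2) * C * t.1 * t.2 * (rho0 p1 p2 u)⁻¹ := by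
  set Q : ℝ := 2 ^ p1 + 2 ^ p2
  have hQ : 0 < Q := by positivity
  have hrect : ∀ v ∈ Icc (-u.1) (t.1 - u.1) ×ˢ Icc (-u.2) (t.2 - u.2),
      rho0 p1 p2 u / (2 * Q) ≤ rho0 p1 p2 v := fun v hv => by
    have := rho0_le_of_mem_rect hp1.le hp2.le hv
    rw [div_le_iff₀ (by positivity)]
    nlinarith
  have hne : ∀ v ∈ Icc (-u.1) (t.1 - u.1) ×ˢ Icc (-u.2) (t.2 - u.2), v ≠ 0 := by
    rintro v hv rfl
    have h0 : rho0 p1 p2 0 = 0 := by simp [rho0, hp1.ne', hp2.ne']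
    have := hrect 0 hv
    rw [h0] at this
    have : 0 < rho0 p1 p2 u / (2 * Q) := by positivity
    linarith
  have hK : ∀ v ∈ Icc (-u.1) (t.1 - u.1) ×ˢ Icc (-u.2) (t.2 - u.2),
      |pd12 g v| ≤ C * (2 * Q * (rho0 p1 p2 u)⁻¹) := fun v hv => by
    refine (hD v (hne v hv)).trans (mul_le_mul_of_nonneg_left ?_ hC)
    calc (rho0 p1 p2 v)⁻¹ ≤ (rho0 p1 p2 u / (2 * Q))⁻¹ := inv_anti₀ (by positivity) (hrect v hv)
      _ = 2 * Q * (rho0 p1 p2 u)⁻¹ := by rw [inv_div, div_eq_mul_inv]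
  have h := abs_rect_increment_le isOpen_compl_singleton hsm (by linarith) (by linarith)
    hne hK
  calc _ ≤ C * (2 * Q * (rho0 p1 p2 u)⁻¹) * (t.2 - u.2 - -u.2) * (t.1 - u.1 - -u.1) := h
    _ = 2 * Q * C * t.1 * t.2 * (rho0 p1 p2 u)⁻¹ := by ring

lemma rect_increment_rpow_isBigO (hp1 : 0 < p1) (hp2 : 0 < p2) (hα : 0 ≤ α) (hC : 0 ≤ C)
    (hsm : ContDiffOn ℝ 2 g {0}ᶜ) (hD : ∀ u, u ≠ 0 → |pd12 g u| ≤ C * (rho0 p1 p2 u)⁻¹)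
    {t : ℝ × ℝ} (ht1 : 0 ≤ t.1) (ht2 : 0 ≤ t.2) :
    (fun u : ℝ × ℝ => |g (t.1 - u.1, t.2 - u.2) - g (-u.1, t.2 - u.2)
      - g (t.1 - u.1, -u.2) + g (-u.1, -u.2)| ^ α) =O[cocompact (ℝ × ℝ)]
      fun u => rho0 p1 p2 u ^ (-α) := by
  have hK : 0 ≤ 2 * (2 ^ p1 + 2 ^ p2) * C * t.1 * t.2 := by positivity
  refine IsBigO.of_bound ((2 * (2 ^ p1 + 2 ^ p2) * C * t.1 * t.2) ^ α) ?_
  have hρ := tendsto_rho0_cocompact hp1 hp2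
  filter_upwards [hρ.eventually_ge_atTop (2 * (2 ^ p1 + 2 ^ p2) * rho0 p1 p2 t),
    hρ.eventually_gt_atTop 0] with u hu hu0
  rw [Real.norm_eq_abs, Real.norm_eq_abs, abs_of_nonneg (Real.rpow_nonneg (abs_nonneg _) _),
    abs_of_pos (Real.rpow_pos_of_pos hu0 _)]
  calc _ ≤ (2 * (2 ^ p1 + 2 ^ p2) * C * t.1 * t.2 * (rho0 p1 p2 u)⁻¹) ^ α :=
        Real.rpow_le_rpow (abs_nonneg _)
          (abs_rect_increment_le_of_rho0_le hp1 hp2 hC hsm hD ht1 ht2 hu0 hu) hα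
    _ = (2 * (2 ^ p1 + 2 ^ p2) * C * t.1 * t.2) ^ α * rho0 p1 p2 u ^ (-α) := by
        rw [Real.mul_rpow hK (inv_nonneg.2 hu0.le), Real.inv_rpow hu0.le, Real.rpow_neg hu0.le]

end RectIncrement

theorem stmt_11_general (α p1 p2 C : ℝ) (hα0 : 0 < α)
    (hp1 : 0 < p1) (hp2 : 0 < p2)
    (hPlow : α / (1 + α) < 1 / p1 + 1 / p2) (hPhigh : 1 / p1 + 1 / p2 < α)
    (hC : 0 < C)
    (g0 : ℝ × ℝ → ℝ) (hmeas : Measurable g0)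
    (hsm : ContDiffOn ℝ 2 g0 {(0 : ℝ × ℝ)}ᶜ)
    (hg : ∀ u : ℝ × ℝ, u ≠ 0 → |g0 u| ≤ C * rho0 p1 p2 u ^ (1 / p1 + 1 / p2 - 1))
    (hD : ∀ u : ℝ × ℝ, u ≠ 0 → |pd12 g0 u| ≤ C * (rho0 p1 p2 u)⁻¹) :
    ∀ t : ℝ × ℝ, 0 < t.1 → 0 < t.2 →
      Integrable (fun u : ℝ × ℝ =>
        |g0 (t.1 - u.1, t.2 - u.2) - g0 (-u.1, t.2 - u.2)
          - g0 (t.1 - u.1, -u.2) + g0 (-u.1, -u.2)| ^ α) volume := by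
  intro t ht1 ht2
  have hβ : -(1 / p1 + 1 / p2) < (1 / p1 + 1 / p2 - 1) * α := by
    have := (div_lt_iff₀ (by linarith : (0 : ℝ) < 1 + α)).1 hPlow
    nlinarith
  have hloc := locallyIntegrable_rect_increment_rpow hα0.le hmeas
    (locallyIntegrable_abs_rpow_of_abs_le_rho0_rpow hα0.le hC.le hmeas hg
      (locallyIntegrable_rho0_rpow hp1 hp2 hβ)) t
  exact hloc.integrable_of_isBigO_cocompact
    ((rect_increment_rpow_isBigO hp1 hp2 hα0.le hC.le hsm hD ht1.le ht2.le).trans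
      (rho0_rpow_neg_isBigO hp1 hp2 hα0.le))
    ((integrable_two_add_rho0_rpow_neg hp1 hp2 hPhigh).integrableAtFilter _)

theorem stmt_11 (α p1 p2 C : ℝ) (hα0 : 0 < α) (hα2 : α ≤ 2)
    (hp1 : 0 < p1) (hp2 : 0 < p2)
    (hPlow : α / (1 + α) < 1 / p1 + 1 / p2) (hPhigh : 1 / p1 + 1 / p2 < α)
    (hPne : 1 / p1 + 1 / p2 ≠ 1) (hC : 0 < C)
    (g0 : ℝ × ℝ → ℝ) (hmeas : Measurable g0)
    (hsm : ContDiffOn ℝ 2 g0 {(0 : ℝ × ℝ)}ᶜ)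
    (hg : ∀ u : ℝ × ℝ, u ≠ 0 → |g0 u| ≤ C * rho0 p1 p2 u ^ (1 / p1 + 1 / p2 - 1))
    (hD : ∀ u : ℝ × ℝ, u ≠ 0 → |pd12 g0 u| ≤ C * (rho0 p1 p2 u)⁻¹) :
    ∀ t : ℝ × ℝ, 0 < t.1 → 0 < t.2 →
      Integrable (fun u : ℝ × ℝ =>
        |g0 (t.1 - u.1, t.2 - u.2) - g0 (-u.1, t.2 - u.2)
          - g0 (t.1 - u.1, -u.2) + g0 (-u.1, -u.2)| ^ α) volume :=
  stmt_11_general α p1 p2 C hα0 hp1 hp2 hPlow hPhigh hC g0 hmeas hsm hg hD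
end
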